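/- arXiv:2412.13592 — 4 statements merged into one kernel-verified Lean document; each statement's English description precedes it below -/
import Mathlib

section
/- For r = 1, …, R, let P^{(r)} ∈ ℝ^{N×k_r} be arbitrary matrices and let Q^{(r)} ∈ Q_ot(k_r, k̄) be coupling matrices. Define P̄* ∈ P_{N,k̄} by setting, for each i ∈ [N], [P̄*]_{ij} = 1 for some j attaining the maximum of p ↦ [Σ_{r=1}^{R} P^{(r)} Q^{(r)}]_{ip} over p ∈ [k̄], and [P̄*]_{ij} = 0 otherwise. Then P̄* is a global minimizer over the set of partition matrices P_{N,k̄} of the function P̄ ↦ (1/R) Σ_{r=1}^{R} Σ_{i=1}^{k_r} Σ_{j=1}^{k̄} ‖P^{(r)}_{:,i} − P̄_{:,j}‖_2² · Q^{(r)}_{ij}, where P_{:,i} denotes the i-th column of a matrix P. -/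
open Matrix BigOperators

/-- The set of coupling matrices `Q_ot(k, k̄)`: nonnegative matrices with row sums `1/k`
and column sums `1/k̄`. -/
def QotSet (k kb : ℕ) : Set (Matrix (Fin k) (Fin kb) ℝ) :=
  {Q | (∀ i j, 0 ≤ Q i j) ∧ (∀ i, ∑ j, Q i j = 1 / (k : ℝ)) ∧
    (∀ j, ∑ i, Q i j = 1 / (kb : ℝ))}

lemma sum3_comm {α β γ : Type*} [Fintype α] [Fintype β] [Fintype γ]
    (f : α → β → γ → ℝ) :
    ∑ i, ∑ j, ∑ a, f i j a = ∑ a, ∑ j, ∑ i, f i j a := by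
  calc ∑ i, ∑ j, ∑ a, f i j a = ∑ i, ∑ a, ∑ j, f i j a := by
        exact Finset.sum_congr rfl fun i _ => Finset.sum_comm
    _ = ∑ a, ∑ i, ∑ j, f i j a := Finset.sum_comm
    _ = ∑ a, ∑ j, ∑ i, f i j a := Finset.sum_congr rfl fun a _ => Finset.sum_comm

lemma sum3_rot {α β γ : Type*} [Fintype α] [Fintype β] [Fintype γ]
    (f : α → β → γ → ℝ) :
    ∑ i, ∑ j, ∑ a, f i j a = ∑ j, ∑ a, ∑ i, f i j a := by
  calc ∑ i, ∑ j, ∑ a, f i j a = ∑ j, ∑ i, ∑ a, f i j a := Finset.sum_comm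
    _ = ∑ j, ∑ a, ∑ i, f i j a := Finset.sum_congr rfl fun j _ => Finset.sum_comm

lemma expand_one {N k kb : ℕ} (P : Matrix (Fin N) (Fin k) ℝ)
    (B : Matrix (Fin N) (Fin kb) ℝ) (Q : Matrix (Fin k) (Fin kb) ℝ) :
    ∑ i, ∑ j, (∑ a, (P a i - B a j) ^ 2) * Q i j
      = (∑ i, ∑ j, (∑ a, (P a i) ^ 2) * Q i j)
        + ∑ j, (∑ a, (B a j) ^ 2) * (∑ i, Q i j)
        - 2 * ∑ a, ∑ j, B a j * ∑ i, P a i * Q i j := by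
  have h : ∀ i j, (∑ a, (P a i - B a j) ^ 2) * Q i j
      = (∑ a, (P a i) ^ 2) * Q i j + (∑ a, (B a j) ^ 2) * Q i j
        - ∑ a, 2 * (B a j * (P a i * Q i j)) := by
    intro i j
    rw [Finset.sum_mul, Finset.sum_mul, Finset.sum_mul,
      ← Finset.sum_add_distrib, ← Finset.sum_sub_distrib]
    exact Finset.sum_congr rfl fun a _ => by ring
  simp only [h, Finset.sum_sub_distrib, Finset.sum_add_distrib]
  congr 1
  · congr 1
    rw [Finset.sum_comm]
    refine Finset.sum_congr rfl fun j _ => ?_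
    rw [Finset.mul_sum]
  · rw [sum3_comm fun i j a => 2 * (B a j * (P a i * Q i j))]
    rw [Finset.mul_sum]
    refine Finset.sum_congr rfl fun a _ => ?_
    rw [Finset.mul_sum]
    refine Finset.sum_congr rfl fun j _ => ?_
    rw [Finset.mul_sum, Finset.mul_sum]
/-- given matrices `P^{(r)} ∈ ℝ^{N×k_r}` and couplings `Q^{(r)} ∈ Q_ot(k_r,k̄)`,
the partition matrix `P̄*` whose row `i` places its `1` at a column maximizing
`[Σ_r P^{(r)} Q^{(r)}]_{i·}` globally minimizes
`P̄ ↦ (1/R) Σ_r Σ_{i,j} ‖P^{(r)}_{:,i} − P̄_{:,j}‖² Q^{(r)}_{ij}` over partition matrices. -/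
theorem stmt7 {N kb R : ℕ} (hR : 0 < R)
    (k : Fin R → ℕ)
    (P : ∀ r : Fin R, Matrix (Fin N) (Fin (k r)) ℝ)
    (Q : ∀ r : Fin R, Matrix (Fin (k r)) (Fin kb) ℝ)
    (hQ : ∀ r, Q r ∈ QotSet (k r) kb)
    (Pstar : Matrix (Fin N) (Fin kb) ℝ)
    (hstar01 : ∀ i j, Pstar i j = 0 ∨ Pstar i j = 1)
    (hstarrow : ∀ i, ∑ j, Pstar i j = 1)
    (hargmax : ∀ i j, Pstar i j = 1 →
      ∀ p, (∑ r, P r * Q r) i p ≤ (∑ r, P r * Q r) i j) :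
    ∀ Pbar : Matrix (Fin N) (Fin kb) ℝ,
      (∀ i j, Pbar i j = 0 ∨ Pbar i j = 1) → (∀ i, ∑ j, Pbar i j = 1) →
      (1 / (R : ℝ)) * ∑ r, ∑ i, ∑ j, (∑ a, (P r a i - Pstar a j) ^ 2) * Q r i j
        ≤ (1 / (R : ℝ)) * ∑ r, ∑ i, ∑ j, (∑ a, (P r a i - Pbar a j) ^ 2) * Q r i j := by
  intro Pbar h01 hrow
  have hRnn : (0:ℝ) ≤ 1 / R := by positivity
  apply mul_le_mul_of_nonneg_left _ hRnn
  set M : Matrix (Fin N) (Fin kb) ℝ := ∑ r, P r * Q r with hM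
  -- key row-wise bound
  have key : ∀ a, ∑ j, Pbar a j * M a j ≤ ∑ j, Pstar a j * M a j := by
    intro a
    obtain ⟨j0, hj0⟩ : ∃ j0, Pstar a j0 = 1 := by
      by_contra hc
      push_neg at hc
      have : ∑ j, Pstar a j = 0 := Finset.sum_eq_zero fun j _ =>
        (hstar01 a j).resolve_right (hc j)
      rw [hstarrow a] at this; norm_num at this
    have hmax := hargmax a j0 hj0
    calc ∑ j, Pbar a j * M a j ≤ ∑ j, Pbar a j * M a j0 := by
          refine Finset.sum_le_sum fun j _ => ?_
          rcases h01 a j with h | h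
          · simp [h]
          · simp only [h, one_mul]; exact hmax j
      _ = M a j0 := by rw [← Finset.sum_mul, hrow a, one_mul]
      _ = ∑ j, Pstar a j * M a j0 := by rw [← Finset.sum_mul, hstarrow a, one_mul]
      _ ≤ ∑ j, Pstar a j * M a j := by
          refine Finset.sum_le_sum fun j _ => ?_
          rcases hstar01 a j with h | h
          · simp [h]
          · simp only [h, one_mul]; exact hargmax a j h j0
  -- number of ones: ∑ j ∑ a B a j ^ 2 for a 0/1 matrix with unit row sums
  have sqsum : ∀ (B : Matrix (Fin N) (Fin kb) ℝ), (∀ i j, B i j = 0 ∨ B i j = 1) →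
      (∀ i, ∑ j, B i j = 1) → ∑ j, ∑ a, (B a j) ^ 2 = (N : ℝ) := by
    intro B hB01 hBrow
    rw [Finset.sum_comm]
    have : ∀ a, ∑ j, (B a j) ^ 2 = 1 := by
      intro a
      rw [← hBrow a]
      refine Finset.sum_congr rfl fun j _ => ?_
      rcases hB01 a j with h | h <;> simp [h]
    simp [this]
  -- expand both costs
  have hexp : ∀ (B : Matrix (Fin N) (Fin kb) ℝ), (∀ i j, B i j = 0 ∨ B i j = 1) →
      (∀ i, ∑ j, B i j = 1) →
      ∑ r, ∑ i, ∑ j, (∑ a, (P r a i - B a j) ^ 2) * Q r i j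
        = (∑ r, ∑ i, ∑ j, (∑ a, (P r a i) ^ 2) * Q r i j)
          + (R : ℝ) * ((1 / (kb : ℝ)) * (N : ℝ))
          - 2 * ∑ a, ∑ j, B a j * M a j := by
    intro B hB01 hBrow
    have step : ∀ r : Fin R,
        ∑ i, ∑ j, (∑ a, (P r a i - B a j) ^ 2) * Q r i j
          = (∑ i, ∑ j, (∑ a, (P r a i) ^ 2) * Q r i j)
            + (1 / (kb : ℝ)) * (N : ℝ)
            - 2 * ∑ a, ∑ j, B a j * ((P r * Q r) a j) := by
      intro r
      rw [expand_one (P r) B (Q r)]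
      congr 1
      · congr 1
        have : ∀ j, (∑ i, Q r i j) = 1 / (kb : ℝ) := (hQ r).2.2
        calc ∑ j, (∑ a, (B a j) ^ 2) * (∑ i, Q r i j)
            = ∑ j, (∑ a, (B a j) ^ 2) * (1 / (kb : ℝ)) := by
              refine Finset.sum_congr rfl fun j _ => by rw [this j]
          _ = (∑ j, ∑ a, (B a j) ^ 2) * (1 / (kb : ℝ)) := by rw [Finset.sum_mul]
          _ = (1 / (kb : ℝ)) * (N : ℝ) := by rw [sqsum B hB01 hBrow]; ring
    calc ∑ r, ∑ i, ∑ j, (∑ a, (P r a i - B a j) ^ 2) * Q r i j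
        = ∑ r, ((∑ i, ∑ j, (∑ a, (P r a i) ^ 2) * Q r i j)
            + (1 / (kb : ℝ)) * (N : ℝ)
            - 2 * ∑ a, ∑ j, B a j * ((P r * Q r) a j)) :=
          Finset.sum_congr rfl fun r _ => step r
      _ = (∑ r, ∑ i, ∑ j, (∑ a, (P r a i) ^ 2) * Q r i j)
            + (R : ℝ) * ((1 / (kb : ℝ)) * (N : ℝ))
            - 2 * ∑ r, ∑ a, ∑ j, B a j * ((P r * Q r) a j) := by
          rw [Finset.sum_sub_distrib, Finset.sum_add_distrib, Finset.sum_const,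
            Finset.card_univ, Fintype.card_fin, nsmul_eq_mul, ← Finset.mul_sum]
      _ = _ := by
          congr 1
          rw [sum3_rot fun r a j => B a j * ((P r * Q r) a j)]
          congr 1
          refine Finset.sum_congr rfl fun a _ => Finset.sum_congr rfl fun j _ => ?_
          rw [← Finset.mul_sum]
          exact congrArg (B a j * ·) (Matrix.sum_apply a j Finset.univ fun r => P r * Q r).symm
  rw [hexp Pstar hstar01 hstarrow, hexp Pbar h01 hrow]
  have := Finset.sum_le_sum (fun a (_ : a ∈ Finset.univ) => key a)
  linarith
end

section
/- For r = 1, …, R, let P^{(r)} ∈ ℝ^{N×k_r} be matrices and let Q^{(r)} ∈ Q_ot(k_r, k̄) be coupling matrices. Then for every partition matrix P̄ ∈ P_{N,k̄} the following identity holds: Σ_{r=1}^{R} Σ_{i=1}^{k_r} Σ_{j=1}^{k̄} ‖P^{(r)}_{:,i} − P̄_{:,j}‖_2² · Q^{(r)}_{ij} = Σ_{r=1}^{R} (1/k_r) Σ_{i=1}^{k_r} ‖P^{(r)}_{:,i}‖_2² − 2 Σ_{r=1}^{R} ⟨P̄, P^{(r)} Q^{(r)}⟩ + R·N/k̄, where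 P_{:,i} denotes the i-th column of a matrix P. -/
open Matrix BigOperators

/-- Frobenius inner product of two real matrices. -/
noncomputable def frobInner {m n : ℕ} (A B : Matrix (Fin m) (Fin n) ℝ) : ℝ :=
  ∑ i, ∑ j, A i j * B i j

lemma stmt8_single {N k kb : ℕ}
    (P : Matrix (Fin N) (Fin k) ℝ) (Q : Matrix (Fin k) (Fin kb) ℝ)
    (hrow : ∀ i, ∑ j, Q i j = 1 / (k : ℝ))
    (hcol : ∀ j, ∑ i, Q i j = 1 / (kb : ℝ))
    (Pbar : Matrix (Fin N) (Fin kb) ℝ)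
    (hbar01 : ∀ i j, Pbar i j = 0 ∨ Pbar i j = 1)
    (hbarrow : ∀ i, ∑ j, Pbar i j = 1) :
    ∑ i, ∑ j, (∑ a, (P a i - Pbar a j) ^ 2) * Q i j
      = (1 / (k : ℝ)) * ∑ i, ∑ a, (P a i) ^ 2
        - 2 * frobInner Pbar (P * Q) + (N : ℝ) / (kb : ℝ) := by
  have hsq : ∀ a j, (Pbar a j) ^ 2 = Pbar a j := by
    intro a j; rcases hbar01 a j with h | h <;> simp [h]
  have expand : ∀ i j, (∑ a, (P a i - Pbar a j) ^ 2) * Q i j =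
      (∑ a, (P a i) ^ 2) * Q i j
        - 2 * ((∑ a, P a i * Pbar a j) * Q i j)
        + (∑ a, Pbar a j) * Q i j := by
    intro i j
    have h1 : ∑ a, (P a i - Pbar a j) ^ 2
        = ∑ a, ((P a i) ^ 2 - 2 * (P a i * Pbar a j) + Pbar a j) := by
      refine Finset.sum_congr rfl fun a _ => ?_
      rw [sub_sq, hsq a j]; ring
    rw [h1, Finset.sum_add_distrib, Finset.sum_sub_distrib, ← Finset.mul_sum]
    ring
  calc ∑ i, ∑ j, (∑ a, (P a i - Pbar a j) ^ 2) * Q i j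
      = ∑ i, ∑ j, ((∑ a, (P a i) ^ 2) * Q i j
          - 2 * ((∑ a, P a i * Pbar a j) * Q i j)
          + (∑ a, Pbar a j) * Q i j) := by
        exact Finset.sum_congr rfl fun i _ => Finset.sum_congr rfl fun j _ => expand i j
    _ = (∑ i, ∑ j, (∑ a, (P a i) ^ 2) * Q i j)
          - 2 * (∑ i, ∑ j, (∑ a, P a i * Pbar a j) * Q i j)
          + ∑ i, ∑ j, (∑ a, Pbar a j) * Q i j := by
        simp [Finset.sum_add_distrib, Finset.sum_sub_distrib, Finset.mul_sum]
    _ = (1 / (k : ℝ)) * ∑ i, ∑ a, (P a i) ^ 2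
        - 2 * frobInner Pbar (P * Q) + (N : ℝ) / (kb : ℝ) := by
        have e1 : ∑ i, ∑ j, (∑ a, (P a i) ^ 2) * Q i j
            = (1 / (k : ℝ)) * ∑ i, ∑ a, (P a i) ^ 2 := by
          rw [Finset.mul_sum]
          refine Finset.sum_congr rfl fun i _ => ?_
          rw [← Finset.mul_sum, hrow i]; ring
        have e2 : ∑ i, ∑ j, (∑ a, P a i * Pbar a j) * Q i j
            = frobInner Pbar (P * Q) := by
          calc ∑ i, ∑ j, (∑ a, P a i * Pbar a j) * Q i j
              = ∑ i, ∑ j, ∑ a, Pbar a j * (P a i * Q i j) := by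
                refine Finset.sum_congr rfl fun i _ => Finset.sum_congr rfl fun j _ => ?_
                rw [Finset.sum_mul]
                exact Finset.sum_congr rfl fun a _ => by ring
            _ = ∑ j, ∑ i, ∑ a, Pbar a j * (P a i * Q i j) := Finset.sum_comm
            _ = ∑ j, ∑ a, ∑ i, Pbar a j * (P a i * Q i j) :=
                Finset.sum_congr rfl fun j _ => Finset.sum_comm
            _ = ∑ a, ∑ j, ∑ i, Pbar a j * (P a i * Q i j) := Finset.sum_comm
            _ = frobInner Pbar (P * Q) := by
                unfold frobInner
                simp [Matrix.mul_apply, Finset.mul_sum]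
        have e3 : ∑ i, ∑ j, (∑ a, Pbar a j) * Q i j = (N : ℝ) / (kb : ℝ) := by
          rw [Finset.sum_comm (f := fun (i : Fin k) (j : Fin kb) => (∑ a, Pbar a j) * Q i j)]
          have h4 : ∀ j, ∑ i, (∑ a, Pbar a j) * Q i j
              = (∑ a, Pbar a j) * (1 / (kb : ℝ)) := by
            intro j; rw [← Finset.mul_sum, hcol j]
          simp only [h4]
          rw [← Finset.sum_mul, Finset.sum_comm]
          simp only [hbarrow, Finset.sum_const, Finset.card_univ, Fintype.card_fin,
            nsmul_eq_mul, mul_one]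
          ring
        rw [e1, e2, e3]

/-- for matrices `P^{(r)}`, couplings `Q^{(r)} ∈ Q_ot(k_r,k̄)`, and any
partition matrix `P̄`:
`Σ_r Σ_{i,j} ‖P^{(r)}_{:,i} − P̄_{:,j}‖² Q^{(r)}_{ij}
  = Σ_r (1/k_r) Σ_i ‖P^{(r)}_{:,i}‖² − 2 Σ_r ⟨P̄, P^{(r)} Q^{(r)}⟩ + R·N/k̄`. -/
theorem stmt8 {N kb R : ℕ}
    (k : Fin R → ℕ)
    (P : ∀ r : Fin R, Matrix (Fin N) (Fin (k r)) ℝ)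
    (Q : ∀ r : Fin R, Matrix (Fin (k r)) (Fin kb) ℝ)
    (hQ : ∀ r, Q r ∈ QotSet (k r) kb)
    (Pbar : Matrix (Fin N) (Fin kb) ℝ)
    (hbar01 : ∀ i j, Pbar i j = 0 ∨ Pbar i j = 1)
    (hbarrow : ∀ i, ∑ j, Pbar i j = 1) :
    ∑ r, ∑ i, ∑ j, (∑ a, (P r a i - Pbar a j) ^ 2) * Q r i j
      = ∑ r, (1 / (k r : ℝ)) * ∑ i, ∑ a, (P r a i) ^ 2
        - 2 * ∑ r, frobInner Pbar (P r * Q r)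
        + (R : ℝ) * (N : ℝ) / (kb : ℝ) := by
  have h : ∀ r, ∑ i, ∑ j, (∑ a, (P r a i - Pbar a j) ^ 2) * Q r i j
      = (1 / (k r : ℝ)) * ∑ i, ∑ a, (P r a i) ^ 2
        - 2 * frobInner Pbar (P r * Q r) + (N : ℝ) / (kb : ℝ) := fun r =>
    stmt8_single (P r) (Q r) (hQ r).2.1 (hQ r).2.2 Pbar hbar01 hbarrow
  calc ∑ r, ∑ i, ∑ j, (∑ a, (P r a i - Pbar a j) ^ 2) * Q r i j
      = ∑ r, ((1 / (k r : ℝ)) * ∑ i, ∑ a, (P r a i) ^ 2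
          - 2 * frobInner Pbar (P r * Q r) + (N : ℝ) / (kb : ℝ)) :=
        Finset.sum_congr rfl fun r _ => h r
    _ = _ := by
        rw [Finset.sum_add_distrib, Finset.sum_sub_distrib, ← Finset.mul_sum,
          Finset.sum_const, Finset.card_univ, Fintype.card_fin, nsmul_eq_mul]
        ring
end

section
/- (Weak duality for the quadratic-OT alignment problem.) Let D ∈ ℝ^{k×k} be a diagonal matrix with strictly positive diagonal entries d_1, …, d_k, and let C ∈ ℝ^{k×k̄}. Then for every coupling matrix Q ∈ Q_ot(k, k̄) and every μ ∈ ℝ^{k}, ν ∈ ℝ^{k̄}, one has: tr(Q^⊤ D Q) − 2 ⟨C, Q⟩ ≥ (1/k) Σ_{i=1}^{k} μ_i + (1/k̄) Σ_{j=1}^{k̄} ν_j − (1/4) Σ_{i=1}^{k} Σ_{j=1}^{k̄} (1/d_i) · (max{μ_i + ν_j + 2 C_{ij}, 0})². -/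
open Matrix BigOperators

lemma ptwise (d q m v c : ℝ) (hd : 0 < d) (hq : 0 ≤ q) :
    m * q + v * q - 1 / 4 * (1 / d * max (m + v + 2 * c) 0 ^ 2)
      ≤ d * q ^ 2 - 2 * (c * q) := by
  have htd : d * (1 / d) = 1 := by field_simp
  rcases le_or_gt (m + v + 2 * c) 0 with h | h
  · rw [max_eq_right h]
    nlinarith [mul_nonneg hq hq, hd.le, mul_nonneg (neg_nonneg.mpr h) hq]
  · rw [max_eq_left h.le]
    nlinarith [sq_nonneg (2 * d * q - (m + v + 2 * c)), hd, htd,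
      mul_pos hd hd, sq_nonneg (m + v + 2 * c)]

/-- weak duality for the quadratic-OT alignment problem:
for `D = diag(d)` with `d_i > 0`, any `C`, any coupling `Q ∈ Q_ot(k,k̄)` and any `μ, ν`:
`tr(Qᵀ D Q) − 2⟨C,Q⟩ ≥ (1/k)Σ_i μ_i + (1/k̄)Σ_j ν_j − (1/4)Σ_{i,j}(1/d_i)(max{μ_i+ν_j+2C_{ij},0})²`. -/
theorem stmt11 {k kb : ℕ}
    (d : Fin k → ℝ) (hd : ∀ i, 0 < d i)
    (C : Matrix (Fin k) (Fin kb) ℝ)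
    (Q : Matrix (Fin k) (Fin kb) ℝ) (hQ : Q ∈ QotSet k kb)
    (μ : Fin k → ℝ) (ν : Fin kb → ℝ) :
    Matrix.trace (Qᵀ * Matrix.diagonal d * Q) - 2 * frobInner C Q
      ≥ (1 / (k : ℝ)) * ∑ i, μ i + (1 / (kb : ℝ)) * ∑ j, ν j
        - (1 / 4) * ∑ i, ∑ j, (1 / d i) * (max (μ i + ν j + 2 * C i j) 0) ^ 2 := by
  obtain ⟨hpos, hrow, hcol⟩ := hQ
  have htr : Matrix.trace (Qᵀ * Matrix.diagonal d * Q) = ∑ j, ∑ i, d i * Q i j ^ 2 := by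
    simp only [Matrix.trace, Matrix.diag, Matrix.mul_assoc, Matrix.mul_apply,
      Matrix.diagonal_apply, Matrix.transpose_apply, ite_mul, mul_ite, zero_mul,
      mul_zero, Finset.sum_ite_eq, Finset.sum_ite_eq', Finset.mem_univ, if_true]
    apply Finset.sum_congr rfl
    intro j _
    apply Finset.sum_congr rfl
    intro i _
    ring
  have hmu : (1 / (k : ℝ)) * ∑ i, μ i = ∑ i, ∑ j, μ i * Q i j := by
    rw [Finset.mul_sum]
    refine Finset.sum_congr rfl fun i _ => ?_
    rw [← Finset.mul_sum, hrow i]; ring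
  have hnu : (1 / (kb : ℝ)) * ∑ j, ν j = ∑ i, ∑ j, ν j * Q i j := by
    rw [Finset.sum_comm, Finset.mul_sum]
    refine Finset.sum_congr rfl fun j _ => ?_
    rw [← Finset.mul_sum, hcol j]; ring
  have key : ∑ i, ∑ j, (μ i * Q i j + ν j * Q i j
        - 1 / 4 * (1 / d i * max (μ i + ν j + 2 * C i j) 0 ^ 2))
      ≤ ∑ i, ∑ j, (d i * Q i j ^ 2 - 2 * (C i j * Q i j)) :=
    Finset.sum_le_sum fun i _ => Finset.sum_le_sum fun j _ =>
      ptwise (d i) (Q i j) (μ i) (ν j) (C i j) (hd i) (hpos i j)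
  have e1 : (∑ j, ∑ i, d i * Q i j ^ 2) = ∑ i, ∑ j, d i * Q i j ^ 2 :=
    Finset.sum_comm
  have e2 : ∑ i, ∑ j, (μ i * Q i j + ν j * Q i j
        - 1 / 4 * (1 / d i * max (μ i + ν j + 2 * C i j) 0 ^ 2))
      = (∑ i, ∑ j, μ i * Q i j) + (∑ i, ∑ j, ν j * Q i j)
        - ∑ i, ∑ j, 1 / 4 * (1 / d i * max (μ i + ν j + 2 * C i j) 0 ^ 2) := by
    simp [Finset.sum_add_distrib, Finset.sum_sub_distrib]
  have e3 : ∑ i, ∑ j, (d i * Q i j ^ 2 - 2 * (C i j * Q i j))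
      = (∑ i, ∑ j, d i * Q i j ^ 2) - ∑ i, ∑ j, 2 * (C i j * Q i j) := by
    simp [Finset.sum_sub_distrib]
  have e4 : frobInner C Q = ∑ i, ∑ j, C i j * Q i j := rfl
  have e5 : ∑ i, ∑ j, 1 / 4 * (1 / d i * max (μ i + ν j + 2 * C i j) 0 ^ 2)
      = 1 / 4 * ∑ i, ∑ j, (1 / d i) * max (μ i + ν j + 2 * C i j) 0 ^ 2 := by
    simp [Finset.mul_sum]
  have e6 : ∑ i, ∑ j, 2 * (C i j * Q i j) = 2 * ∑ i, ∑ j, C i j * Q i j := by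
    simp [Finset.mul_sum]
  rw [htr, e4]
  linarith [key, e1, e2, e3, e5, e6]
end

section
/- (Dual optimality certificate for the quadratic-OT alignment problem.) Let D ∈ ℝ^{k×k} be a diagonal matrix with strictly positive diagonal entries d_1, …, d_k, and let C ∈ ℝ^{k×k̄}. Suppose μ ∈ ℝ^{k} and ν ∈ ℝ^{k̄} are such that the matrix Q* defined entrywise by Q*_{ij} = (1/(2 d_i)) · max{μ_i + ν_j + 2 C_{ij}, 0} belongs to Q_ot(k, k̄). Then: (i) tr(Q*^⊤ D Q*) − 2⟨C, Q*⟩ = (1/k) Σ_i μ_i + (1/k̄) Σ_j ν_j − (1/4) Σ_{i,j} (1/d_i)(max{μ_i + ν_j + 2C_{ij}, 0})²; and (ii) Q* is a global minimizer of Q ↦ tr(Q^⊤ D Q) − 2⟨C, Q⟩ over Q_ot(k, k̄). -/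
open Matrix BigOperators

lemma aux_obj {k kb : ℕ} (d : Fin k → ℝ) (C Q : Matrix (Fin k) (Fin kb) ℝ) :
    Matrix.trace (Qᵀ * Matrix.diagonal d * Q) - 2 * frobInner C Q
      = ∑ i, ∑ j, (d i * Q i j ^ 2 - 2 * C i j * Q i j) := by
  have ht : Matrix.trace (Qᵀ * Matrix.diagonal d * Q) = ∑ i, ∑ j, d i * Q i j ^ 2 := by
    rw [Matrix.trace]
    simp only [Matrix.diag_apply, Matrix.mul_apply, Matrix.transpose_apply,
      Matrix.diagonal_apply, ite_mul, zero_mul, mul_ite, mul_zero,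
      Finset.sum_ite_eq, Finset.sum_ite_eq', Finset.mem_univ, if_true]
    rw [Finset.sum_comm]
    congr 1; ext i; congr 1; ext j; ring
  rw [ht, frobInner, Finset.mul_sum, ← Finset.sum_sub_distrib]
  congr 1; ext i
  rw [Finset.mul_sum, ← Finset.sum_sub_distrib]
  congr 1; ext j; ring

lemma aux_lin {k kb : ℕ} (μ : Fin k → ℝ) (ν : Fin kb → ℝ)
    (Q : Matrix (Fin k) (Fin kb) ℝ) (hQ : Q ∈ QotSet k kb) :
    ∑ i, ∑ j, (μ i + ν j) * Q i j
      = (1 / (k : ℝ)) * ∑ i, μ i + (1 / (kb : ℝ)) * ∑ j, ν j := by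
  obtain ⟨-, hrow, hcol⟩ := hQ
  calc ∑ i, ∑ j, (μ i + ν j) * Q i j
      = ∑ i, ((∑ j, μ i * Q i j) + ∑ j, ν j * Q i j) := by
        congr 1; ext i; rw [← Finset.sum_add_distrib]; congr 1; ext j; ring
    _ = (∑ i, ∑ j, μ i * Q i j) + ∑ i, ∑ j, ν j * Q i j := Finset.sum_add_distrib
    _ = (∑ i, μ i * (1 / (k : ℝ))) + ∑ j, ν j * (1 / (kb : ℝ)) := by
        rw [Finset.sum_comm (f := fun i j => ν j * Q i j)]
        congr 1
        · exact Finset.sum_congr rfl fun i _ => by rw [← Finset.mul_sum, hrow]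
        · exact Finset.sum_congr rfl fun j _ => by rw [← Finset.mul_sum, hcol]
    _ = (1 / (k : ℝ)) * ∑ i, μ i + (1 / (kb : ℝ)) * ∑ j, ν j := by
        rw [← Finset.sum_mul, ← Finset.sum_mul]; ring

lemma aux_pt_le (d a x : ℝ) (hd : 0 < d) (hx : 0 ≤ x) :
    -((max a 0) ^ 2 / (4 * d)) ≤ d * x ^ 2 - a * x := by
  set m := max a 0 with hm
  have h1 : a ≤ m := le_max_left _ _
  have h2 : 0 ≤ m := le_max_right _ _
  have key : 0 ≤ d * x ^ 2 - m * x + m ^ 2 / (4 * d) := by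
    have : d * x ^ 2 - m * x + m ^ 2 / (4 * d) = (2 * d * x - m) ^ 2 / (4 * d) := by
      field_simp; ring
    rw [this]
    positivity
  nlinarith [mul_nonneg hx (sub_nonneg.mpr h1)]

lemma aux_pt_eq (d a : ℝ) (hd : 0 < d) :
    d * ((1 / (2 * d)) * max a 0) ^ 2 - a * ((1 / (2 * d)) * max a 0)
      = -((max a 0) ^ 2 / (4 * d)) := by
  have hma : a * max a 0 = (max a 0) ^ 2 := by
    rcases le_or_gt a 0 with h | h
    · simp [max_eq_right h]
    · rw [max_eq_left h.le]; ring
  have hd' : d ≠ 0 := ne_of_gt hd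
  have h2 : d * ((1 / (2 * d)) * max a 0) ^ 2 - a * ((1 / (2 * d)) * max a 0)
      = (max a 0) ^ 2 / (4 * d) - (a * max a 0) / (2 * d) := by
    field_simp; ring
  rw [h2, hma]
  field_simp
  ring

/-- dual optimality certificate for the quadratic-OT alignment problem:
if `Q*_{ij} = (1/(2d_i)) max{μ_i + ν_j + 2C_{ij}, 0}` is a coupling matrix, then
(i) its primal objective equals the dual objective at `(μ, ν)`, and
(ii) `Q*` globally minimizes `Q ↦ tr(Qᵀ D Q) − 2⟨C,Q⟩` over `Q_ot(k,k̄)`. -/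
theorem stmt12 {k kb : ℕ}
    (d : Fin k → ℝ) (hd : ∀ i, 0 < d i)
    (C : Matrix (Fin k) (Fin kb) ℝ)
    (μ : Fin k → ℝ) (ν : Fin kb → ℝ)
    (Qstar : Matrix (Fin k) (Fin kb) ℝ)
    (hQstar : Qstar = Matrix.of fun i j => (1 / (2 * d i)) * max (μ i + ν j + 2 * C i j) 0)
    (hmem : Qstar ∈ QotSet k kb) :
    (Matrix.trace (Qstarᵀ * Matrix.diagonal d * Qstar) - 2 * frobInner C Qstar
      = (1 / (k : ℝ)) * ∑ i, μ i + (1 / (kb : ℝ)) * ∑ j, ν j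
        - (1 / 4) * ∑ i, ∑ j, (1 / d i) * (max (μ i + ν j + 2 * C i j) 0) ^ 2) ∧
    (∀ Q ∈ QotSet k kb,
      Matrix.trace (Qstarᵀ * Matrix.diagonal d * Qstar) - 2 * frobInner C Qstar
        ≤ Matrix.trace (Qᵀ * Matrix.diagonal d * Q) - 2 * frobInner C Q) := by
  -- objective decomposition for any feasible Q
  have hdecomp : ∀ Q : Matrix (Fin k) (Fin kb) ℝ, Q ∈ QotSet k kb →
      Matrix.trace (Qᵀ * Matrix.diagonal d * Q) - 2 * frobInner C Q
        = (∑ i, ∑ j, (d i * Q i j ^ 2 - (μ i + ν j + 2 * C i j) * Q i j))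
          + ((1 / (k : ℝ)) * ∑ i, μ i + (1 / (kb : ℝ)) * ∑ j, ν j) := by
    intro Q hQ
    rw [aux_obj, ← aux_lin μ ν Q hQ, ← Finset.sum_add_distrib]
    congr 1; ext i
    rw [← Finset.sum_add_distrib]
    congr 1; ext j; ring
  have heqQ : (∑ i, ∑ j, (d i * Qstar i j ^ 2 - (μ i + ν j + 2 * C i j) * Qstar i j))
      = - ((1 / 4) * ∑ i, ∑ j, (1 / d i) * (max (μ i + ν j + 2 * C i j) 0) ^ 2) := by
    rw [Finset.mul_sum, ← Finset.sum_neg_distrib]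
    refine Finset.sum_congr rfl fun i _ => ?_
    rw [Finset.mul_sum, ← Finset.sum_neg_distrib]
    refine Finset.sum_congr rfl fun j _ => ?_
    rw [hQstar]
    simp only [Matrix.of_apply]
    rw [aux_pt_eq (d i) (μ i + ν j + 2 * C i j) (hd i)]
    have : d i ≠ 0 := ne_of_gt (hd i)
    field_simp
  constructor
  · rw [hdecomp Qstar hmem, heqQ]; ring
  · intro Q hQ
    rw [hdecomp Qstar hmem, hdecomp Q hQ, heqQ]
    have hle : - ((1 / 4) * ∑ i, ∑ j, (1 / d i) * (max (μ i + ν j + 2 * C i j) 0) ^ 2)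
        ≤ ∑ i, ∑ j, (d i * Q i j ^ 2 - (μ i + ν j + 2 * C i j) * Q i j) := by
      rw [Finset.mul_sum, ← Finset.sum_neg_distrib]
      refine Finset.sum_le_sum fun i _ => ?_
      rw [Finset.mul_sum, ← Finset.sum_neg_distrib]
      refine Finset.sum_le_sum fun j _ => ?_
      have := aux_pt_le (d i) (μ i + ν j + 2 * C i j) (Q i j) (hd i) (hQ.1 i j)
      have hdne : d i ≠ 0 := ne_of_gt (hd i)
      calc -(1 / 4 * (1 / d i * max (μ i + ν j + 2 * C i j) 0 ^ 2))
          = -((max (μ i + ν j + 2 * C i j) 0) ^ 2 / (4 * d i)) := by field_simp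
        _ ≤ _ := this
    linarith
end
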